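/- Let α ∈ ℤ_{≥0}^n be a weakly increasing composition (α_1 ≤ α_2 ≤ ⋯ ≤ α_n), and let λ be the partition obtained by rearranging the parts of α decreasingly. Then for β ∈ ℤ_{≥0}^n, β ≤_κ α if and only if β is a rearrangement of some partition μ with μ ⊴ λ in the dominance order. -/

import Mathlib

/-- One move generating the order `≤_κ`: from `γ` we may pass to `t_{i,j} γ`
(exchange the `i`-th and `j`-th entries) provided `γ i < γ j`, or to
`m_{i,j} γ = γ + e_i - e_j` provided `γ i < γ j - 1`. -/
def KeyStep (n : ℕ) (γ δ : Fin n → ℕ) : Prop :=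
  ∃ i j : Fin n, i < j ∧
    ((γ i < γ j ∧ δ = γ ∘ Equiv.swap i j) ∨
     (γ i + 1 < γ j ∧
       δ = Function.update (Function.update γ i (γ i + 1)) j (γ j - 1)))

/-- `β ≤_κ α` : `β` is obtained from `α` by a finite sequence of moves. -/
def KeyLe (n : ℕ) (β α : Fin n → ℕ) : Prop :=
  Relation.ReflTransGen (KeyStep n) α β

/-- Dominance order: `μ ⊴ lam` iff all partial sums of `μ` are at most those of `lam`
and the total sums agree. -/
def Dominates (n : ℕ) (μ lam : Fin n → ℕ) : Prop :=
  (∀ i : Fin n, ∑ k ∈ Finset.Iic i, μ k ≤ ∑ k ∈ Finset.Iic i, lam k) ∧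
    ∑ k, μ k = ∑ k, lam k

/-!
Along a move the total is preserved and, for every `k`, the largest sum of `k` entries can only
decrease (an `m`-move that raises an entry of a `k`-set `T` but not its partner is dominated by the
`t`-move on the same pair). For antitone tuples these largest sums are the partial sums of the
dominance order, which gives one direction.

Conversely, let `μ ⊴ λ`, `μ ≠ λ`, let `a` be the first index with `μ a < λ a` and `b` the first with
`λ b < μ b`. Moving one unit from the last part of `λ` equal to `λ a` to the first part equal to
`λ b` keeps `λ` a partition dominating `μ`, since the partial sums of `μ` are strictly smaller
than those of `λ` between `a` and `b`. Read backwards this is an `m`-move on the increasing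
composition, and it decreases the sum of all partial sums, so induction reaches `μ` reversed.
Any rearrangement of an increasing composition is then reached by `t`-moves undoing descents,
each of which increases `∑ i, i * β i`.
-/

open Finset

theorem Antitone.sum_le_sum_Iic {ι M : Type*} [LinearOrder ι] [LocallyFiniteOrderBot ι]
    [AddCommMonoid M] [Preorder M] [IsOrderedCancelAddMonoid M] {f : ι → M}
    (hf : Antitone f) {T : Finset ι} {i : ι} (hT : #T = #(Iic i)) :
    ∑ x ∈ T, f x ≤ ∑ x ∈ Iic i, f x := by
  classical
  rw [← sum_sdiff_le_sum_sdiff]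
  calc ∑ x ∈ T \ Iic i, f x
      ≤ #(T \ Iic i) • f i := sum_le_card_nsmul _ _ _ fun x hx => by
        simp only [mem_sdiff, mem_Iic, not_le] at hx
        exact hf hx.2.le
    _ = #(Iic i \ T) • f i := by rw [card_sdiff_comm hT]
    _ ≤ ∑ x ∈ Iic i \ T, f x := card_nsmul_le_sum _ _ _ fun x hx => by
        simp only [mem_sdiff, mem_Iic] at hx
        exact hf hx.1

def topSum {ι : Type*} [Fintype ι] (f : ι → ℕ) (k : ℕ) : ℕ :=
  (powersetCard k univ).sup fun T => ∑ x ∈ T, f x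

section topSum

variable {ι : Type*} [Fintype ι]

theorem sum_le_topSum (f : ι → ℕ) {T : Finset ι} : ∑ x ∈ T, f x ≤ topSum f #T :=
  le_sup (f := fun T => ∑ x ∈ T, f x) (mem_powersetCard_univ.2 rfl)

theorem topSum_le {f : ι → ℕ} {k m : ℕ} (h : ∀ T : Finset ι, #T = k → ∑ x ∈ T, f x ≤ m) :
    topSum f k ≤ m :=
  Finset.sup_le fun T hT => h T (mem_powersetCard_univ.1 hT)

theorem topSum_comp_equiv_le {κ : Type*} [Fintype κ] (f : ι → ℕ) (e : κ ≃ ι) (k : ℕ) :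
    topSum (f ∘ e) k ≤ topSum f k :=
  topSum_le fun T hT => by
    simpa [hT, sum_map] using sum_le_topSum f (T := T.map e.toEmbedding)

theorem topSum_comp_equiv {κ : Type*} [Fintype κ] (f : ι → ℕ) (e : κ ≃ ι) (k : ℕ) :
    topSum (f ∘ e) k = topSum f k := by
  refine (topSum_comp_equiv_le f e k).antisymm ?_
  simpa [Function.comp_def] using topSum_comp_equiv_le (f ∘ e) e.symm k

theorem Antitone.topSum_succ {n : ℕ} {f : Fin n → ℕ} (hf : Antitone f) (i : Fin n) :
    topSum f (i + 1) = ∑ x ∈ Iic i, f x := by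
  refine le_antisymm (topSum_le fun T hT => hf.sum_le_sum_Iic ?_) ?_
  · rw [hT, Fin.card_Iic]
  · simpa [Fin.card_Iic] using sum_le_topSum f (T := Iic i)

end topSum

-- The move `m_{i,j}`, i.e. `f + e_i - e_j`; the subtraction truncates when `f j = 0`.
def moveUnit {ι : Type*} [DecidableEq ι] (f : ι → ℕ) (i j : ι) : ι → ℕ :=
  Function.update (Function.update f i (f i + 1)) j (f j - 1)

section moveUnit

variable {ι : Type*} [DecidableEq ι] {f : ι → ℕ} {i j : ι}

theorem sum_moveUnit_add (hij : i ≠ j) (hj : 1 ≤ f j) (S : Finset ι) :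
    ∑ x ∈ S, moveUnit f i j x + (if j ∈ S then 1 else 0) =
      ∑ x ∈ S, f x + (if i ∈ S then 1 else 0) := by
  have hpt : ∀ x, moveUnit f i j x + (if x = j then 1 else 0) =
      f x + (if x = i then 1 else 0) := fun x => by
    simp only [moveUnit, Function.update_apply]
    split_ifs <;> subst_vars <;> first | omega | exact absurd rfl hij
  have := sum_congr rfl fun x (_ : x ∈ S) => hpt x
  simpa [sum_add_distrib, sum_ite_eq'] using this

theorem moveUnit_comp_equiv {κ : Type*} [DecidableEq κ] (e : κ ≃ ι) :
    moveUnit f i j ∘ e = moveUnit (f ∘ e) (e.symm i) (e.symm j) := by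
  funext x
  simp [moveUnit, Function.update_apply, e.eq_symm_apply]

end moveUnit

section KeyStep

variable {n : ℕ} {γ δ : Fin n → ℕ}

theorem keyStep_iff_moveUnit : KeyStep n γ δ ↔ ∃ i j : Fin n, i < j ∧
    ((γ i < γ j ∧ δ = γ ∘ Equiv.swap i j) ∨ (γ i + 1 < γ j ∧ δ = moveUnit γ i j)) :=
  Iff.rfl

theorem KeyStep.sum_eq (h : KeyStep n γ δ) : ∑ x, δ x = ∑ x, γ x := by
  obtain ⟨i, j, hij, ⟨-, rfl⟩ | ⟨hlt, rfl⟩⟩ := keyStep_iff_moveUnit.1 h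
  · exact Equiv.sum_comp _ γ
  · simpa using sum_moveUnit_add hij.ne (f := γ) (by omega) univ

theorem moveUnit_le_comp_swap {i j : Fin n} (hlt : γ i + 1 < γ j) {x : Fin n} (hx : x ≠ j) :
    moveUnit γ i j x ≤ (γ ∘ Equiv.swap i j) x := by
  by_cases hxi : x = i
  · subst hxi; simp [moveUnit, hx]; omega
  · simp [moveUnit, hx, hxi, Equiv.swap_apply_of_ne_of_ne hxi hx]

theorem KeyStep.topSum_le (h : KeyStep n γ δ) (k : ℕ) : topSum δ k ≤ topSum γ k := by
  obtain ⟨i, j, hij, ⟨-, rfl⟩ | ⟨hlt, rfl⟩⟩ := keyStep_iff_moveUnit.1 h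
  · exact (topSum_comp_equiv γ _ k).le
  refine topSum_le fun T hT => ?_
  by_cases hT' : i ∈ T ∧ j ∉ T
  · calc ∑ x ∈ T, moveUnit γ i j x
        ≤ ∑ x ∈ T, (γ ∘ Equiv.swap i j) x :=
          sum_le_sum fun x hx => moveUnit_le_comp_swap hlt (ne_of_mem_of_not_mem hx hT'.2)
      _ ≤ topSum (γ ∘ Equiv.swap i j) k := hT ▸ sum_le_topSum _
      _ = topSum γ k := topSum_comp_equiv γ _ k
  · have := sum_moveUnit_add hij.ne (f := γ) (by omega) T
    calc ∑ x ∈ T, moveUnit γ i j x ≤ ∑ x ∈ T, γ x := by grind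
      _ ≤ topSum γ k := hT ▸ sum_le_topSum γ

end KeyStep

section KeyLe

variable {n : ℕ} {α β : Fin n → ℕ}

theorem KeyLe.sum_eq (h : KeyLe n β α) : ∑ x, β x = ∑ x, α x := by
  induction h with
  | refl => rfl
  | tail _ hstep ih => rw [hstep.sum_eq, ih]

theorem KeyLe.topSum_le (h : KeyLe n β α) (k : ℕ) : topSum β k ≤ topSum α k := by
  induction h with
  | refl => exact le_rfl
  | tail _ hstep ih => exact (hstep.topSum_le k).trans ih

end KeyLe

section Rearrangement

variable {n : ℕ}

theorem Antitone.monotone_comp_revPerm {α : Type*} [Preorder α] {f : Fin n → α}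
    (hf : Antitone f) : Monotone (f ∘ Fin.revPerm) :=
  fun _ _ h => hf (Fin.rev_le_rev.2 h)

theorem comp_revPerm_eq_of_antitone {α : Type*} [PartialOrder α] {f g : Fin n → α}
    (hf : Monotone f) (hg : Antitone g) {σ : Equiv.Perm (Fin n)} (h : g = f ∘ σ) :
    g ∘ Fin.revPerm = f := by
  subst h
  have := Tuple.unique_monotone (σ := σ * Fin.revPerm) (τ := 1) hg.monotone_comp_revPerm
    (by simpa using hf)
  rwa [Equiv.Perm.coe_one, Function.comp_id, Equiv.Perm.coe_mul, ← Function.comp_assoc] at this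

theorem exists_antitone_comp_perm {α : Type*} [LinearOrder α] (f : Fin n → α) :
    ∃ σ : Equiv.Perm (Fin n), Antitone (f ∘ σ) :=
  ⟨Fin.revPerm.trans (Tuple.sort f), (Tuple.monotone_sort f).comp_antitone Fin.rev_anti⟩

def moment (β : Fin n → ℕ) : ℕ := ∑ x : Fin n, (x : ℕ) * β x

theorem moment_lt_moment_comp_swap {β : Fin n → ℕ} {i j : Fin n} (hij : i < j)
    (hβ : β j < β i) : moment β < moment (β ∘ Equiv.swap i j) := by
  have hrest : ∑ x ∈ ({i, j} : Finset (Fin n))ᶜ, (x : ℕ) * β (Equiv.swap i j x) =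
      ∑ x ∈ ({i, j} : Finset (Fin n))ᶜ, (x : ℕ) * β x :=
    sum_congr rfl fun x hx => by
      simp only [mem_compl, mem_insert, mem_singleton, not_or] at hx
      rw [Equiv.swap_apply_of_ne_of_ne hx.1 hx.2]
  unfold moment
  rw [← sum_add_sum_compl {i, j}, ← sum_add_sum_compl {i, j}, sum_pair hij.ne, sum_pair hij.ne]
  simp only [Function.comp_apply, Equiv.swap_apply_left, Equiv.swap_apply_right, hrest]
  have hij' : (i : ℕ) < j := hij
  nlinarith

theorem moment_comp_perm_le {γ : Fin n → ℕ} (hγ : Monotone γ) (σ : Equiv.Perm (Fin n)) :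
    moment (γ ∘ σ) ≤ moment γ :=
  Monovary.sum_mul_comp_perm_le_sum_mul (f := fun x : Fin n => (x : ℕ)) fun _ _ h =>
    Fin.le_def.1 (le_of_not_gt fun hji => (hγ hji.le).not_gt h)

theorem keyLe_comp_perm_of_monotone {γ : Fin n → ℕ} (hγ : Monotone γ) (σ : Equiv.Perm (Fin n)) :
    KeyLe n (γ ∘ σ) γ := by
  induction hm : moment γ - moment (γ ∘ σ) using Nat.strong_induction_on generalizing σ with
  | _ m ih =>
  by_cases hmono : Monotone (γ ∘ σ)
  · rw [Tuple.unique_monotone (τ := 1) hmono (by simpa using hγ), Equiv.Perm.coe_one,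
      Function.comp_id]
    exact .refl
  obtain ⟨i, j, hij, hlt⟩ : ∃ i j, i < j ∧ (γ ∘ σ) j < (γ ∘ σ) i := by
    simp only [Monotone, not_forall, not_le] at hmono
    obtain ⟨i, j, hle, hlt⟩ := hmono
    exact ⟨i, j, hle.lt_of_ne (by rintro rfl; exact lt_irrefl _ hlt), hlt⟩
  have hstep : KeyStep n (γ ∘ ⇑(σ * Equiv.swap i j)) (γ ∘ σ) :=
    ⟨i, j, hij, Or.inl ⟨by simpa using hlt, by funext x; simp⟩⟩
  refine .tail (ih _ ?_ (σ * Equiv.swap i j) rfl) hstep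
  have := moment_lt_moment_comp_swap hij hlt
  have := moment_comp_perm_le hγ (σ * Equiv.swap i j)
  rw [Equiv.Perm.coe_mul, ← Function.comp_assoc] at *
  omega

end Rearrangement

section Transfer

variable {ι : Type*} [LinearOrder ι]

theorem Antitone.exists_last_eq [Fintype ι] {β : Type*} [PartialOrder β] {f : ι → β}
    (hf : Antitone f) (a : ι) : ∃ r, a ≤ r ∧ f r = f a ∧ ∀ t, r < t → f t < f a := by
  classical
  set S := univ.filter fun t => f t = f a
  have haS : a ∈ S := by simp [S]
  refine ⟨S.max' ⟨a, haS⟩, S.le_max' a haS, (mem_filter.1 (S.max'_mem _)).2, fun t ht => ?_⟩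
  refine (hf ((S.le_max' a haS).trans ht.le)).lt_of_ne fun h => ht.not_ge (S.le_max' t ?_)
  simp [S, h]

theorem Antitone.exists_first_eq [Fintype ι] {β : Type*} [PartialOrder β] {f : ι → β}
    (hf : Antitone f) (b : ι) : ∃ s, s ≤ b ∧ f s = f b ∧ ∀ t, t < s → f b < f t :=
  hf.dual.exists_last_eq (OrderDual.toDual b)

variable [DecidableEq ι] {f : ι → ℕ} {r s : ι}

theorem antitone_moveUnit (hf : Antitone f) (hrs : r < s) (hr : ∀ t, r < t → f t < f r)
    (hs : ∀ t, t < s → f s < f t) (hgap : f s + 1 < f r) : Antitone (moveUnit f s r) := by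
  intro x y hxy
  rcases hxy.eq_or_lt with rfl | hxy
  · rfl
  have hfxy := hf hxy.le
  simp only [moveUnit, Function.update_apply]
  by_cases hxr : x = r
  · subst hxr
    by_cases hys : y = s
    · simp [hys, hrs.ne']
      omega
    · simp [hxy.ne', hys]
      have := hr y hxy
      omega
  · by_cases hys : y = s
    · subst hys
      simp [hxr, hxy.ne, hrs.ne']
      have := hs x hxy
      omega
    · simp only [hxr, hys, if_false]
      split_ifs <;> subst_vars <;> omega

theorem sum_Iic_moveUnit_add [LocallyFiniteOrderBot ι] (hrs : r < s) (hr : 1 ≤ f r) (t : ι) :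
    ∑ x ∈ Iic t, moveUnit f s r x + (if r ≤ t ∧ t < s then 1 else 0) = ∑ x ∈ Iic t, f x := by
  have := sum_moveUnit_add hrs.ne' hr (Iic t)
  simp only [mem_Iic] at this
  by_cases hst : s ≤ t
  · simp_all [hrs.le.trans hst]
  · simp_all [not_le.1 hst]

end Transfer

section Dominates

variable {n : ℕ} {μ lam : Fin n → ℕ}

theorem dominates_of_topSum_le (hμ : Antitone μ) (hlam : Antitone lam)
    (h : ∀ k, topSum μ k ≤ topSum lam k) (hsum : ∑ x, μ x = ∑ x, lam x) : Dominates n μ lam :=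
  ⟨fun i => hμ.topSum_succ i ▸ hlam.topSum_succ i ▸ h _, hsum⟩

theorem Dominates.exists_lt_lt (hdom : Dominates n μ lam) (hne : μ ≠ lam) :
    ∃ a b, a < b ∧ μ a < lam a ∧ lam b < μ b ∧
      ∀ t, a ≤ t → t < b → ∑ x ∈ Iic t, μ x < ∑ x ∈ Iic t, lam x := by
  obtain ⟨x, hx⟩ := Function.ne_iff.1 hne
  obtain ⟨a, ha, hamin⟩ := wellFounded_lt.has_min {t | μ t ≠ lam t} ⟨x, hx⟩
  have heq : ∀ t < a, μ t = lam t := fun t ht => not_not.1 fun h => hamin t h ht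
  have hlt : μ a < lam a := by
    have hpre : ∑ x ∈ Iio a, μ x = ∑ x ∈ Iio a, lam x :=
      sum_congr rfl fun t ht => heq t (mem_Iio.1 ht)
    have := hdom.1 a
    rw [Iic_eq_cons_Iio, sum_cons, sum_cons, hpre] at this
    exact lt_of_le_of_ne (by omega) ha
  obtain ⟨y, hy⟩ : ∃ y, lam y < μ y := by
    by_contra! h
    exact (sum_lt_sum (fun i _ => h i) ⟨a, mem_univ _, hlt⟩).ne hdom.2
  obtain ⟨b, hb, hbmin⟩ := wellFounded_lt.has_min {t | lam t < μ t} ⟨y, hy⟩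
  have hle : ∀ t < b, μ t ≤ lam t := fun t ht => not_lt.1 fun h => hbmin t h ht
  refine ⟨a, b, lt_of_not_ge fun hba => ?_, hlt, hb, fun t hat htb =>
    sum_lt_sum (fun x hx => hle x ((mem_Iic.1 hx).trans_lt htb)) ⟨a, mem_Iic.2 hat, hlt⟩⟩
  rcases hba.lt_or_eq with hba | rfl
  · exact hb.ne' (heq b hba)
  · exact lt_asymm hb hlt

theorem Dominates.exists_moveUnit (hμ : Antitone μ) (hlam : Antitone lam)
    (hdom : Dominates n μ lam) (hne : μ ≠ lam) :
    ∃ r s, r < s ∧ lam s + 1 < lam r ∧ Antitone (moveUnit lam s r) ∧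
      Dominates n μ (moveUnit lam s r) := by
  obtain ⟨a, b, hab, ha, hb, hstrict⟩ := hdom.exists_lt_lt hne
  have hgap : lam b + 1 < lam a := by have := hμ hab.le; omega
  obtain ⟨r, har, hr, hr_lt⟩ := hlam.exists_last_eq a
  obtain ⟨s, hsb, hs, hs_lt⟩ := hlam.exists_first_eq b
  have hrs : r < s := lt_of_not_ge fun hsr => by have := hlam hsr; omega
  have hsum := sum_Iic_moveUnit_add (f := lam) hrs (by omega)
  refine ⟨r, s, hrs, by omega, antitone_moveUnit hlam hrs (by rwa [hr]) (by rwa [hs]) (by omega),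
    fun t => ?_, ?_⟩
  · have := hsum t
    have := hdom.1 t
    split_ifs at * with hrts
    · have := hstrict t (har.trans hrts.1) (hrts.2.trans_le hsb)
      omega
    · omega
  · have := sum_moveUnit_add (f := lam) hrs.ne' (by omega) univ
    simp only [mem_univ, if_true] at this
    have := hdom.2
    omega

theorem sum_sum_Iic_moveUnit_lt {r s : Fin n} (hrs : r < s) (hr : 1 ≤ lam r) :
    ∑ t, ∑ x ∈ Iic t, moveUnit lam s r x < ∑ t, ∑ x ∈ Iic t, lam x :=
  sum_lt_sum (fun t _ => (Nat.le_add_right _ _).trans (sum_Iic_moveUnit_add hrs hr t).le)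
    ⟨r, mem_univ _, by have := sum_Iic_moveUnit_add hrs hr r; simp [hrs] at this; omega⟩

theorem keyLe_rev_of_dominates (hμ : Antitone μ) (hlam : Antitone lam)
    (hdom : Dominates n μ lam) : KeyLe n (μ ∘ Fin.revPerm) (lam ∘ Fin.revPerm) := by
  induction hΦ : ∑ t, ∑ x ∈ Iic t, lam x using Nat.strong_induction_on generalizing lam with
  | _ N ih =>
  by_cases hne : μ = lam
  · subst hne
    exact .refl
  obtain ⟨r, s, hrs, hgap, hanti, hdom'⟩ := hdom.exists_moveUnit hμ hlam hne
  have hstep : KeyStep n (lam ∘ Fin.revPerm) (moveUnit lam s r ∘ Fin.revPerm) := by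
    rw [moveUnit_comp_equiv]
    exact ⟨_, _, by simpa using hrs, Or.inr ⟨by simpa using hgap, rfl⟩⟩
  exact .head hstep (ih _ (hΦ ▸ sum_sum_Iic_moveUnit_lt hrs (by omega)) hanti hdom' rfl)

end Dominates

theorem keyLe_iff_rearrangement_dominated_general (n : ℕ)
    (α : Fin n → ℕ) (hα : Monotone α)
    (lam : Fin n → ℕ) (hlam : Antitone lam)
    (hre : ∃ σ : Equiv.Perm (Fin n), lam = α ∘ σ)
    (β : Fin n → ℕ) :
    KeyLe n β α ↔
      ∃ μ : Fin n → ℕ, Antitone μ ∧ Dominates n μ lam ∧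
        ∃ σ : Equiv.Perm (Fin n), β = μ ∘ σ := by
  obtain ⟨σ, hσ⟩ := hre
  have hα_rev : lam ∘ Fin.revPerm = α := comp_revPerm_eq_of_antitone hα hlam hσ
  constructor
  · intro h
    obtain ⟨τ, hτ⟩ := exists_antitone_comp_perm β
    refine ⟨β ∘ τ, hτ, dominates_of_topSum_le hτ hlam (fun k => ?_) ?_, τ⁻¹, by ext; simp⟩
    · rw [topSum_comp_equiv, ← topSum_comp_equiv lam Fin.revPerm, hα_rev]
      exact h.topSum_le k
    · calc ∑ x, (β ∘ τ) x = ∑ x, β x := Equiv.sum_comp τ β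
        _ = ∑ x, α x := h.sum_eq
        _ = ∑ x, lam x := hα_rev ▸ Equiv.sum_comp _ lam
  · rintro ⟨μ, hμ, hdom, τ, rfl⟩
    rw [← hα_rev]
    have hcomp : (μ ∘ Fin.revPerm) ∘ ⇑(Fin.revPerm * τ : Equiv.Perm (Fin n)) = μ ∘ τ := by
      funext x
      simp
    exact (keyLe_rev_of_dominates hμ hlam hdom).trans
      (hcomp ▸ keyLe_comp_perm_of_monotone hμ.monotone_comp_revPerm _)

/-- For a weakly increasing composition `α` with decreasing rearrangement `lam`,
one has `β ≤_κ α` if and only if `β` is a rearrangement of some partition `μ` with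
`μ ⊴ lam` in the dominance order. -/
theorem keyLe_iff_rearrangement_dominated (n : ℕ) (hn : 1 ≤ n)
    (α : Fin n → ℕ) (hα : Monotone α)
    (lam : Fin n → ℕ) (hlam : Antitone lam)
    (hre : ∃ σ : Equiv.Perm (Fin n), lam = α ∘ σ)
    (β : Fin n → ℕ) :
    KeyLe n β α ↔
      ∃ μ : Fin n → ℕ, Antitone μ ∧ Dominates n μ lam ∧
        ∃ σ : Equiv.Perm (Fin n), β = μ ∘ σ :=
  keyLe_iff_rearrangement_dominated_general n α hα lam hlam hre β
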